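/- The function v is given explicitly by: v(t) = sin_p(a₁^{1/p} t + π_p/2) for 0 ≤ t ≤ π_p/(2a₁^{1/p}); v(t) = −(a₁/b₁)^{1/p} sin_p(b₁^{1/p}(t − π_p/(2a₁^{1/p}))) for π_p/(2a₁^{1/p}) < t ≤ π_p; and v(2π_p − t) = v(t) for t ∈ [π_p, 2π_p]. -/

import Mathlib

/-!
The equation `(φ_p(x'))' + a φ_p(x⁺) − b φ_p(x⁻) = 0` conserves the energy
`a (x⁺)^p + b (x⁻)^p + (p − 1) |x'|^p`, and this gives uniqueness for its initial value problem
although `φ_q = φ_p⁻¹` need not be Lipschitz: near a point where `x' ≠ 0` (resp. `x ≠ 0`) the energy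
expresses `x'` through `x` (resp. `x` through `φ_p(x')`), which leaves a scalar autonomous equation
`y' = Θ(y)` with `Θ` continuous and of one sign, solved by separation of variables; where
`x = x' = 0` the energy vanishes and so does the solution.

For `ω^p = a` and `c ≥ 0`, `c sin_p(ω t + d)` solves the equation wherever `sin_p(ω t + d) ≥ 0`.
Hence `v` follows `sin_p(a₁^{1/p} t + π_p/2)` down to its zero at `T₁ = π_p/(2a₁^{1/p})`, then the
negative arch `−(a₁/b₁)^{1/p} sin_p(b₁^{1/p}(t − T₁))`, whose minimum sits at
`T₁ + π_p/(2b₁^{1/p}) = π_p` by `a₁^{-1/p} + b₁^{-1/p} = 2`. As `v'(π_p) = 0`, uniqueness makes `v`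
symmetric about `π_p`.

The facts about `sin_p` come from the same tools: `sin_p` is symmetric about its first critical
point `T`, where it equals `(p − 1)^{1/p}`, which is `≤ T` as `|sin_p'| ≤ 1`, and it is positive
on `(0, 2T)`. Periodicity and oddness give `sin_p(π_p) = 0`, and Jordan's inequality gives
`π_p < 4 (p − 1)^{1/p} ≤ 4T`, which leaves only `π_p = 2T`.
-/

/-- The one-dimensional `p`-Laplacian nonlinearity `φ_p(s) = |s|^{p-2} s`. -/
noncomputable def phi (p s : ℝ) : ℝ := |s| ^ (p - 2) * s

/-- The `p`-analogue of `π`: `π_p = 2π (p-1)^{1/p} / (p sin(π/p))`. -/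
noncomputable def pip (p : ℝ) : ℝ :=
  2 * Real.pi * (p - 1) ^ (1 / p) / (p * Real.sin (Real.pi / p))

open Real Set Filter Topology

theorem phi_zero (p : ℝ) : phi p 0 = 0 := by simp [phi]

theorem phi_neg (p s : ℝ) : phi p (-s) = -phi p s := by simp [phi]

theorem phi_mul (p s t : ℝ) : phi p (s * t) = phi p s * phi p t := by
  simp only [phi, abs_mul, mul_rpow (abs_nonneg s) (abs_nonneg t)]
  ring

theorem phi_of_nonneg {p s : ℝ} (hp : 1 < p) (hs : 0 ≤ s) : phi p s = s ^ (p - 1) := by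
  rw [phi, abs_of_nonneg hs, ← rpow_add_one' hs (by linarith)]
  ring_nf

theorem phi_mul_self {p : ℝ} (hp : p ≠ 0) (s : ℝ) : phi p s * s = |s| ^ p := by
  rw [phi, mul_assoc, ← sq, ← sq_abs, ← rpow_two, ← rpow_add' (abs_nonneg s) (by simpa using hp)]
  ring_nf

theorem abs_phi {p : ℝ} (hp : 1 < p) (s : ℝ) : |phi p s| = |s| ^ (p - 1) := by
  rw [← phi_of_nonneg hp (abs_nonneg s), phi, phi, abs_mul, abs_abs,
    abs_of_nonneg (rpow_nonneg (abs_nonneg s) _)]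

theorem phi_max_sub_phi_max (p s : ℝ) :
    phi p (max s 0) - phi p (max (-s) 0) = phi p s := by
  rcases le_total 0 s with hs | hs
  · simp [max_eq_left hs, max_eq_right (neg_nonpos.2 hs), phi_zero]
  · simp [max_eq_right hs, max_eq_left (neg_nonneg.2 hs), phi_zero, phi_neg]

theorem phi_phi {p q : ℝ} (hpq : p.HolderConjugate q) (s : ℝ) : phi q (phi p s) = s := by
  have hp : 1 < p := hpq.lt
  have hq : 1 < q := hpq.symm.lt
  have key : ∀ s, 0 ≤ s → phi q (phi p s) = s := fun s hs => by
    rw [phi_of_nonneg hp hs, phi_of_nonneg hq (rpow_nonneg hs _), ← rpow_mul hs,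
      show (p - 1) * (q - 1) = 1 by linear_combination hpq.sub_one_mul_conj, rpow_one]
  rcases le_total 0 s with hs | hs
  · exact key s hs
  · simpa [phi_neg] using key (-s) (neg_nonneg.2 hs)

theorem abs_phi_rpow {p q : ℝ} (hpq : p.HolderConjugate q) (s : ℝ) : |phi p s| ^ q = |s| ^ p := by
  rw [abs_phi hpq.lt, ← rpow_mul (abs_nonneg s), hpq.sub_one_mul_conj]

theorem continuous_phi {p : ℝ} (hp : 1 < p) : Continuous (phi p) := by
  have h : phi p = fun s => max s 0 ^ (p - 1) - max (-s) 0 ^ (p - 1) := funext fun s => by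
    rw [← phi_max_sub_phi_max, phi_of_nonneg hp (le_max_right _ _),
      phi_of_nonneg hp (le_max_right _ _)]
  rw [h]
  exact ((continuous_id.max continuous_const).rpow_const fun _ => Or.inr (by linarith)).sub
    ((continuous_neg.max continuous_const).rpow_const fun _ => Or.inr (by linarith))

theorem hasDerivAt_max_zero_rpow {p : ℝ} (hp : 1 < p) (x : ℝ) :
    HasDerivAt (fun u : ℝ => max u 0 ^ p) (p * max x 0 ^ (p - 1)) x := by
  have h0 : (0 : ℝ) ^ (p - 1) = 0 := zero_rpow (by linarith)
  rcases lt_trichotomy x 0 with hx | rfl | hx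
  · have h : (fun u : ℝ => max u 0 ^ p) =ᶠ[𝓝 x] fun _ => 0 := by
      filter_upwards [eventually_lt_nhds hx] with u hu
      rw [max_eq_right hu.le, zero_rpow (by linarith)]
    rw [max_eq_right hx.le, h0, mul_zero]
    exact (hasDerivAt_const x 0).congr_of_eventuallyEq h
  · rw [max_self, h0, mul_zero, ← hasDerivWithinAt_univ, ← Iic_union_Ici]
    refine HasDerivWithinAt.union ?_ ?_
    · exact (hasDerivWithinAt_const 0 _ 0).congr
        (fun u hu => by rw [max_eq_right (show u ≤ 0 from hu), zero_rpow (by linarith)])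
        (by rw [max_self, zero_rpow (by linarith)])
    · have := (hasDerivAt_rpow_const (x := 0) (Or.inr hp.le)).hasDerivWithinAt (s := Ici 0)
      rw [h0, mul_zero] at this
      exact this.congr (fun u hu => by rw [max_eq_left (show 0 ≤ u from hu)]) (by simp)
  · have h : (fun u : ℝ => max u 0 ^ p) =ᶠ[𝓝 x] fun u => u ^ p := by
      filter_upwards [eventually_gt_nhds hx] with u hu
      rw [max_eq_left hu.le]
    rw [max_eq_left hx.le]
    exact (hasDerivAt_rpow_const (Or.inl hx.ne')).congr_of_eventuallyEq h

theorem Convex.eq_of_hasDerivAt_eq_zero {I : Set ℝ} (hI : Convex ℝ I) {f : ℝ → ℝ}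
    (hf : ∀ t ∈ I, HasDerivAt f 0 t) {s t : ℝ} (hs : s ∈ I) (ht : t ∈ I) : f s = f t := by
  have := hI.norm_image_sub_le_of_norm_hasDerivWithin_le (f' := fun _ => 0) (C := 0)
    (fun u hu => (hf u hu).hasDerivWithinAt) (fun _ _ => by simp) hs ht
  rw [zero_mul, norm_le_zero_iff, sub_eq_zero] at this
  exact this.symm

/-- Separation of variables: for `Φ' = 1 / Θ`, both `Φ ∘ y₁` and `Φ ∘ y₂` have derivative `1`. -/
theorem ODE_solution_unique_of_pos {Θ : ℝ → ℝ} (hΘ : Continuous Θ) (hΘ0 : ∀ u, 0 < Θ u)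
    {J : Set ℝ} (hJ : Convex ℝ J) {y₁ y₂ : ℝ → ℝ}
    (h₁ : ∀ t ∈ J, HasDerivAt y₁ (Θ (y₁ t)) t) (h₂ : ∀ t ∈ J, HasDerivAt y₂ (Θ (y₂ t)) t)
    {t₀ : ℝ} (ht₀ : t₀ ∈ J) (h : y₁ t₀ = y₂ t₀) : EqOn y₁ y₂ J := by
  set Φ : ℝ → ℝ := fun u => ∫ s in (0 : ℝ)..u, (Θ s)⁻¹
  have hΦ : ∀ u, HasDerivAt Φ (Θ u)⁻¹ u := fun u =>
    ((hΘ.inv₀ fun u => (hΘ0 u).ne').integral_hasStrictDerivAt 0 u).hasDerivAt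
  have hΦmono : StrictMono Φ := strictMono_of_hasDerivAt_pos hΦ fun u => inv_pos.2 (hΘ0 u)
  intro t ht
  refine hΦmono.injective (sub_eq_zero.1 ?_)
  have hconst := hJ.eq_of_hasDerivAt_eq_zero (f := fun t => Φ (y₁ t) - Φ (y₂ t))
    (fun u hu => ?_) ht ht₀
  · simpa [h] using hconst
  · exact (((hΦ _).comp u (h₁ u hu)).sub ((hΦ _).comp u (h₂ u hu))).congr_deriv (by
      simp [inv_mul_cancel₀ (hΘ0 _).ne'])

theorem ODE_solution_unique_of_neg {Θ : ℝ → ℝ} (hΘ : Continuous Θ) (hΘ0 : ∀ u, Θ u < 0)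
    {J : Set ℝ} (hJ : Convex ℝ J) {y₁ y₂ : ℝ → ℝ}
    (h₁ : ∀ t ∈ J, HasDerivAt y₁ (Θ (y₁ t)) t) (h₂ : ∀ t ∈ J, HasDerivAt y₂ (Θ (y₂ t)) t)
    {t₀ : ℝ} (ht₀ : t₀ ∈ J) (h : y₁ t₀ = y₂ t₀) : EqOn y₁ y₂ J := by
  have := ODE_solution_unique_of_pos (Θ := fun u => -Θ (-u)) (by fun_prop)
    (fun u => neg_pos.2 (hΘ0 _)) hJ (y₁ := fun t => -y₁ t) (y₂ := fun t => -y₂ t)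
    (fun t ht => (h₁ t ht).neg.congr_deriv (by simp))
    (fun t ht => (h₂ t ht).neg.congr_deriv (by simp)) ht₀ (by simp [h])
  exact fun t ht => neg_inj.1 (this ht)

def IsFucikSolutionOn (p a b : ℝ) (I : Set ℝ) (x x' : ℝ → ℝ) : Prop :=
  ∀ t ∈ I, HasDerivAt x (x' t) t ∧
    HasDerivAt (fun s => phi p (x' s)) (-a * phi p (max (x t) 0) + b * phi p (max (-x t) 0)) t

noncomputable def fucikPotential (p a b x : ℝ) : ℝ := a * max x 0 ^ p + b * max (-x) 0 ^ p

/-- `p` times the conserved energy of the equation. -/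
noncomputable def fucikEnergy (p a b x y : ℝ) : ℝ := fucikPotential p a b x + (p - 1) * |y| ^ p

theorem continuous_fucikPotential {p : ℝ} (hp : 0 ≤ p) (a b : ℝ) :
    Continuous (fucikPotential p a b) :=
  (continuous_const.mul ((continuous_id.max continuous_const).rpow_const fun _ => Or.inr hp)).add
    (continuous_const.mul ((continuous_neg.max continuous_const).rpow_const fun _ => Or.inr hp))

theorem fucikPotential_of_pos {p : ℝ} (hp : 0 < p) (a b : ℝ) {x : ℝ} (hx : 0 < x) :
    fucikPotential p a b x = a * x ^ p := by
  simp [fucikPotential, max_eq_left hx.le, max_eq_right (neg_nonpos.2 hx.le), zero_rpow hp.ne']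

theorem fucikPotential_one_one {p : ℝ} (hp : 0 < p) (x : ℝ) : fucikPotential p 1 1 x = |x| ^ p := by
  rcases le_total 0 x with hx | hx
  · simp [fucikPotential, max_eq_left hx, max_eq_right (neg_nonpos.2 hx), zero_rpow hp.ne',
      abs_of_nonneg hx]
  · simp [fucikPotential, max_eq_right hx, max_eq_left (neg_nonneg.2 hx), zero_rpow hp.ne',
      abs_of_nonpos hx]

theorem eq_zero_of_fucikEnergy_eq_zero {p a b x y : ℝ} (hp : 1 < p) (ha : 0 < a) (hb : 0 < b)
    (h : fucikEnergy p a b x y = 0) : x = 0 ∧ y = 0 := by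
  have hp0 : p ≠ 0 := by linarith
  have h₁ : 0 ≤ max x 0 ^ p := rpow_nonneg (le_max_right _ _) _
  have h₂ : 0 ≤ max (-x) 0 ^ p := rpow_nonneg (le_max_right _ _) _
  have h₃ : 0 ≤ |y| ^ p := rpow_nonneg (abs_nonneg _) _
  have hp1 : 0 < p - 1 := by linarith
  rw [fucikEnergy, fucikPotential] at h
  have e₁ : max x 0 ^ p = 0 := by nlinarith
  have e₂ : max (-x) 0 ^ p = 0 := by nlinarith
  have e₃ : |y| ^ p = 0 := by nlinarith
  rw [rpow_eq_zero (le_max_right _ _) hp0, max_eq_right_iff] at e₁ e₂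
  rw [rpow_eq_zero (abs_nonneg _) hp0, abs_eq_zero] at e₃
  exact ⟨by linarith, e₃⟩

namespace IsFucikSolutionOn

variable {p a b : ℝ} {I : Set ℝ} {x x' x₁ x₁' x₂ x₂' : ℝ → ℝ}

theorem mono (h : IsFucikSolutionOn p a b I x x') {J : Set ℝ} (hJ : J ⊆ I) :
    IsFucikSolutionOn p a b J x x' :=
  fun t ht => h t (hJ ht)

theorem neg (h : IsFucikSolutionOn p a b I x x') : IsFucikSolutionOn p b a I (-x) (-x') := by
  intro t ht
  obtain ⟨hx, hY⟩ := h t ht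
  refine ⟨hx.neg, ?_⟩
  simp only [Pi.neg_apply, phi_neg, neg_neg]
  exact hY.neg.congr_deriv (by ring)

theorem of_nonneg (h : IsFucikSolutionOn p a b I x x') (hx : ∀ t ∈ I, 0 ≤ x t) (b' : ℝ) :
    IsFucikSolutionOn p a b' I x x' := by
  intro t ht
  obtain ⟨hx', hY⟩ := h t ht
  have h0 : max (-x t) 0 = 0 := max_eq_right (neg_nonpos.2 (hx t ht))
  simpa [h0, phi_zero] using And.intro hx' hY

theorem comp_affine (h : IsFucikSolutionOn p a b univ x x') (hp : p ≠ 0) {c : ℝ} (hc : 0 ≤ c)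
    (ω d : ℝ) :
    IsFucikSolutionOn p (|ω| ^ p * a) (|ω| ^ p * b) univ (fun t => c * x (ω * t + d))
      (fun t => c * ω * x' (ω * t + d)) := by
  intro t _
  have hlin : HasDerivAt (fun t => ω * t + d) ω t := by
    simpa using ((hasDerivAt_id t).const_mul ω).add_const d
  obtain ⟨hx, hY⟩ := h (ω * t + d) (mem_univ _)
  refine ⟨by simpa [mul_comm, mul_assoc] using (hx.comp t hlin).const_mul c, ?_⟩
  simp only [phi_mul]
  refine ((hY.comp t hlin).const_mul (phi p c * phi p ω)).congr_deriv ?_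
  have hmax : ∀ y, max (c * y) 0 = c * max y 0 := fun y => by
    rw [mul_max_of_nonneg _ _ hc, mul_zero]
  rw [hmax, show -(c * x (ω * t + d)) = c * -x (ω * t + d) by ring, hmax, phi_mul, phi_mul,
    ← phi_mul_self hp ω]
  ring

theorem continuousAt_deriv (hp : 1 < p) (h : IsFucikSolutionOn p a b I x x') {t : ℝ}
    (ht : t ∈ I) : ContinuousAt x' t := by
  have hpq : p.HolderConjugate p.conjExponent := .conjExponent hp
  have hx' : x' = fun s => phi p.conjExponent (phi p (x' s)) := funext fun s => (phi_phi hpq _).symm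
  rw [hx']
  exact (continuous_phi hpq.symm.lt).continuousAt.comp (h t ht).2.continuousAt

theorem energy_eq (hp : 1 < p) (hI : Convex ℝ I) (h : IsFucikSolutionOn p a b I x x') {s t : ℝ}
    (hs : s ∈ I) (ht : t ∈ I) :
    fucikEnergy p a b (x s) (x' s) = fucikEnergy p a b (x t) (x' t) := by
  set q := p.conjExponent
  have hpq : p.HolderConjugate q := .conjExponent hp
  -- `x'` need not be differentiable, but `|x'| ^ p = |φ_p x'| ^ q` is
  simp only [fucikEnergy, fucikPotential, ← abs_phi_rpow hpq]
  refine hI.eq_of_hasDerivAt_eq_zero (f := fun u => a * max (x u) 0 ^ p + b * max (-x u) 0 ^ p +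
    (p - 1) * |phi p (x' u)| ^ q) (fun u hu => ?_) hs ht
  obtain ⟨hx, hY⟩ := h u hu
  have h₁ := ((hasDerivAt_max_zero_rpow hp (x u)).comp u hx).const_mul a
  have h₂ := ((hasDerivAt_max_zero_rpow hp (-x u)).comp u hx.neg).const_mul b
  have h₃ := ((hasDerivAt_abs_rpow (phi p (x' u)) hpq.symm.lt).comp u hY).const_mul (p - 1)
  refine ((h₁.add h₂).add h₃).congr_deriv ?_
  have hφ : |phi p (x' u)| ^ (q - 2) * phi p (x' u) = x' u := phi_phi hpq _
  rw [phi_of_nonneg hp (le_max_right _ _), phi_of_nonneg hp (le_max_right _ _)]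
  linear_combination (max (-x u) 0 ^ (p - 1) * b - max (x u) 0 ^ (p - 1) * a) * x' u *
    hpq.sub_one_mul_conj +
    (p - 1) * q * (-(a * max (x u) 0 ^ (p - 1)) + b * max (-x u) 0 ^ (p - 1)) * hφ

theorem eventually_eq_of_deriv_pos (hp : 1 < p) (hI : Convex ℝ I)
    (h₁ : IsFucikSolutionOn p a b I x₁ x₁') (h₂ : IsFucikSolutionOn p a b I x₂ x₂') {t : ℝ}
    (ht : t ∈ I) (hx : x₁ t = x₂ t) (hx' : x₁' t = x₂' t) (hpos : 0 < x₁' t) :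
    ∀ᶠ s in 𝓝[I] t, x₁ s = x₂ s ∧ x₁' s = x₂' s := by
  set E := fucikEnergy p a b (x₁ t) (x₁' t)
  set c := x₁' t
  set Θ : ℝ → ℝ := fun u => max (((E - fucikPotential p a b u) / (p - 1)) ^ p⁻¹) (c / 2)
  have hΘ : Continuous Θ :=
    (((continuous_const.sub (continuous_fucikPotential (by linarith) a b)).div_const _).rpow_const
      fun _ => Or.inr (inv_nonneg.2 (by linarith))).max continuous_const
  have hΘ0 : ∀ u, 0 < Θ u := fun u => (half_pos hpos).trans_le (le_max_right _ _)
  obtain ⟨ε, hε, hball⟩ := Metric.eventually_nhds_iff_ball.1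
    (((h₁.continuousAt_deriv hp ht).eventually (lt_mem_nhds (half_lt_self hpos))).and
      ((h₂.continuousAt_deriv hp ht).eventually
        (lt_mem_nhds (show c / 2 < x₂' t from hx' ▸ half_lt_self hpos))))
  set J := I ∩ Metric.ball t ε
  -- where `x' > c / 2`, the energy identity solves to `x' = Θ x`
  have key : ∀ {y y' : ℝ → ℝ}, IsFucikSolutionOn p a b I y y' →
      fucikEnergy p a b (y t) (y' t) = E → ∀ s ∈ J, c / 2 < y' s → y' s = Θ (y s) := by
    intro y y' hy hyE s hs hlt
    have hE := (hy.energy_eq hp hI hs.1 ht).trans hyE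
    have hy' : 0 < y' s := (half_pos hpos).trans hlt
    rw [fucikEnergy, abs_of_pos hy'] at hE
    have : ((E - fucikPotential p a b (y s)) / (p - 1)) ^ p⁻¹ = y' s := by
      rw [← hE, add_sub_cancel_left, mul_div_cancel_left₀ _ (by linarith),
        rpow_rpow_inv hy'.le (by linarith)]
    simp only [Θ, this, max_eq_left hlt.le]
  have hk₁ := key h₁ rfl
  have hk₂ := key h₂ (by rw [← hx, ← hx'])
  have heq : EqOn x₁ x₂ J :=
    ODE_solution_unique_of_pos hΘ hΘ0 (hI.inter (convex_ball t ε))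
      (fun s hs => hk₁ s hs (hball s hs.2).1 ▸ (h₁ s hs.1).1)
      (fun s hs => hk₂ s hs (hball s hs.2).2 ▸ (h₂ s hs.1).1) ⟨ht, Metric.mem_ball_self hε⟩ hx
  filter_upwards [inter_mem_nhdsWithin I (Metric.ball_mem_nhds t hε)] with s hs
  exact ⟨heq hs, by rw [hk₁ s hs (hball s hs.2).1, hk₂ s hs (hball s hs.2).2, heq hs]⟩

theorem eventually_eq_of_pos (hp : 1 < p) (ha : 0 < a) (hI : Convex ℝ I)
    (h₁ : IsFucikSolutionOn p a b I x₁ x₁') (h₂ : IsFucikSolutionOn p a b I x₂ x₂') {t : ℝ}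
    (ht : t ∈ I) (hx : x₁ t = x₂ t) (hx' : x₁' t = x₂' t) (hpos : 0 < x₁ t) :
    ∀ᶠ s in 𝓝[I] t, x₁ s = x₂ s ∧ x₁' s = x₂' s := by
  set q := p.conjExponent
  have hpq : p.HolderConjugate q := .conjExponent hp
  set E := fucikEnergy p a b (x₁ t) (x₁' t)
  set c := x₁ t
  set Ξ : ℝ → ℝ := fun y => max (((E - (p - 1) * |y| ^ q) / a) ^ p⁻¹) (c / 2)
  have hΞ : Continuous Ξ :=
    (((continuous_const.sub (continuous_const.mul (continuous_abs.rpow_const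
      fun _ => Or.inr (by linarith [hpq.symm.lt])))).div_const _).rpow_const
      fun _ => Or.inr (inv_nonneg.2 (by linarith))).max continuous_const
  have hΞ0 : ∀ y, 0 < Ξ y := fun y => (half_pos hpos).trans_le (le_max_right _ _)
  set Θ : ℝ → ℝ := fun y => -a * Ξ y ^ (p - 1)
  have hΘ : Continuous Θ :=
    continuous_const.mul (hΞ.rpow_const fun _ => Or.inr (by linarith))
  have hΘ0 : ∀ y, Θ y < 0 := fun y =>
    mul_neg_of_neg_of_pos (neg_neg_of_pos ha) (rpow_pos_of_pos (hΞ0 y) _)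
  obtain ⟨ε, hε, hball⟩ := Metric.eventually_nhds_iff_ball.1
    (((h₁ t ht).1.continuousAt.eventually (lt_mem_nhds (half_lt_self hpos))).and
      ((h₂ t ht).1.continuousAt.eventually
        (lt_mem_nhds (show c / 2 < x₂ t from hx ▸ half_lt_self hpos))))
  set J := I ∩ Metric.ball t ε
  -- where `x > c / 2`, the energy identity solves to `x = Ξ (φ_p x')`, so `φ_p x'` solves
  -- the scalar equation `Y' = Θ Y`
  have key : ∀ {y y' : ℝ → ℝ}, IsFucikSolutionOn p a b I y y' →
      fucikEnergy p a b (y t) (y' t) = E → ∀ s ∈ J, c / 2 < y s →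
        y s = Ξ (phi p (y' s)) ∧ HasDerivAt (fun s => phi p (y' s)) (Θ (phi p (y' s))) s := by
    intro y y' hy hyE s hs hlt
    have hE := (hy.energy_eq hp hI hs.1 ht).trans hyE
    have hys : 0 < y s := (half_pos hpos).trans hlt
    rw [fucikEnergy, fucikPotential_of_pos (by linarith) a b hys, ← abs_phi_rpow hpq] at hE
    have hΞy : Ξ (phi p (y' s)) = y s := by
      have : ((E - (p - 1) * |phi p (y' s)| ^ q) / a) ^ p⁻¹ = y s := by
        rw [← hE, add_sub_cancel_right, mul_div_cancel_left₀ _ ha.ne',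
          rpow_rpow_inv hys.le (by linarith)]
      simp only [Ξ, this, max_eq_left hlt.le]
    refine ⟨hΞy.symm, (hy s hs.1).2.congr_deriv ?_⟩
    simp only [Θ, hΞy, max_eq_left hys.le, max_eq_right (neg_nonpos.2 hys.le), phi_zero,
      phi_of_nonneg hp hys.le]
    ring
  have hk₁ := key h₁ rfl
  have hk₂ := key h₂ (by rw [← hx, ← hx'])
  have heq : EqOn (fun s => phi p (x₁' s)) (fun s => phi p (x₂' s)) J :=
    ODE_solution_unique_of_neg hΘ hΘ0 (hI.inter (convex_ball t ε))
      (fun s hs => (hk₁ s hs (hball s hs.2).1).2) (fun s hs => (hk₂ s hs (hball s hs.2).2).2)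
      ⟨ht, Metric.mem_ball_self hε⟩ (by simp only [hx'])
  filter_upwards [inter_mem_nhdsWithin I (Metric.ball_mem_nhds t hε)] with s hs
  refine ⟨?_, by
    rw [← phi_phi hpq (x₁' s), ← phi_phi hpq (x₂' s)]; exact congrArg (phi q) (heq hs)⟩
  rw [(hk₁ s hs (hball s hs.2).1).1, (hk₂ s hs (hball s hs.2).2).1]
  exact congrArg Ξ (heq hs)

theorem eventually_eq (hp : 1 < p) (ha : 0 < a) (hb : 0 < b) (hI : Convex ℝ I)
    (h₁ : IsFucikSolutionOn p a b I x₁ x₁') (h₂ : IsFucikSolutionOn p a b I x₂ x₂') {t : ℝ}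
    (ht : t ∈ I) (hx : x₁ t = x₂ t) (hx' : x₁' t = x₂' t) :
    ∀ᶠ s in 𝓝[I] t, x₁ s = x₂ s ∧ x₁' s = x₂' s := by
  rcases lt_trichotomy (x₁' t) 0 with hd | hd | hd
  · simpa using h₁.neg.eventually_eq_of_deriv_pos hp hI h₂.neg ht (by simp [hx]) (by simp [hx'])
      (by simpa using hd)
  · rcases lt_trichotomy (x₁ t) 0 with hv | hv | hv
    · simpa using h₁.neg.eventually_eq_of_pos hp hb hI h₂.neg ht (by simp [hx]) (by simp [hx'])
        (by simpa using hv)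
    · have hzero : ∀ {y y' : ℝ → ℝ}, IsFucikSolutionOn p a b I y y' → y t = 0 → y' t = 0 →
          ∀ s ∈ I, y s = 0 ∧ y' s = 0 := fun hy h0 h0' s hs =>
        eq_zero_of_fucikEnergy_eq_zero hp ha hb ((hy.energy_eq hp hI hs ht).trans
          (by simp [h0, h0', fucikEnergy, fucikPotential, zero_rpow (by linarith : p ≠ 0)]))
      filter_upwards [self_mem_nhdsWithin] with s hs
      obtain ⟨e₁, e₁'⟩ := hzero h₁ hv hd s hs
      obtain ⟨e₂, e₂'⟩ := hzero h₂ (hx ▸ hv) (hx' ▸ hd) s hs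
      exact ⟨e₁.trans e₂.symm, e₁'.trans e₂'.symm⟩
    · exact h₁.eventually_eq_of_pos hp ha hI h₂ ht hx hx' hv
  · exact h₁.eventually_eq_of_deriv_pos hp hI h₂ ht hx hx' hd

theorem eqOn (hp : 1 < p) (ha : 0 < a) (hb : 0 < b) (hI : Convex ℝ I)
    (h₁ : IsFucikSolutionOn p a b I x₁ x₁') (h₂ : IsFucikSolutionOn p a b I x₂ x₂') {t₀ : ℝ}
    (ht₀ : t₀ ∈ I) (hx : x₁ t₀ = x₂ t₀) (hx' : x₁' t₀ = x₂' t₀) :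
    EqOn x₁ x₂ I ∧ EqOn x₁' x₂' I := by
  set A : ℝ → Prop := fun s => x₁ s = x₂ s ∧ x₁' s = x₂' s
  -- the set where the solutions agree is relatively open and closed in `I`
  have hloc : ∀ s ∈ I, ∀ᶠ u in 𝓝[I] s, (A s ↔ A u) := by
    intro s hs
    by_cases hA : A s
    · filter_upwards [h₁.eventually_eq hp ha hb hI h₂ hs hA.1 hA.2] with u hu
      exact iff_of_true hA hu
    · have hne : ∀ᶠ u in 𝓝 s, ¬A u := by
        rcases not_and_or.1 hA with h | h
        · filter_upwards [((h₁ s hs).1.continuousAt.sub (h₂ s hs).1.continuousAt).eventually_ne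
            (sub_ne_zero.2 h)] with u hu hAu
          exact hu (sub_eq_zero.2 hAu.1)
        · filter_upwards [((h₁.continuousAt_deriv hp hs).sub
            (h₂.continuousAt_deriv hp hs)).eventually_ne (sub_ne_zero.2 h)] with u hu hAu
          exact hu (sub_eq_zero.2 hAu.2)
      filter_upwards [nhdsWithin_le_nhds hne] with u hu
      exact iff_of_false hA hu
  have hA : ∀ s ∈ I, A s := fun s hs =>
    (hI.isPreconnected.induction₂ (fun s u => A s ↔ A u) hloc
      (fun _ _ _ _ _ _ => Iff.trans) (fun _ _ _ _ => Iff.symm) ht₀ hs).1 ⟨hx, hx'⟩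
  exact ⟨fun s hs => (hA s hs).1, fun s hs => (hA s hs).2⟩

theorem apply_two_mul_sub (hp : 1 < p) (ha : 0 < a) (hb : 0 < b)
    (h : IsFucikSolutionOn p a b univ x x') {c : ℝ} (hc : x' c = 0) (t : ℝ) :
    x (2 * c - t) = x t ∧ x' (2 * c - t) = -x' t := by
  have hrefl := h.comp_affine (by linarith) zero_le_one (-1) (2 * c)
  simp only [abs_neg, abs_one, one_rpow, one_mul] at hrefl
  obtain ⟨h₁, h₂⟩ := hrefl.eqOn hp ha hb convex_univ h (mem_univ c) (by ring_nf)
    (by rw [show -1 * c + 2 * c = c by ring, hc]; ring)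
  have e₁ := h₁ (mem_univ t)
  have e₂ := h₂ (mem_univ t)
  simp only [neg_one_mul, neg_add_eq_sub] at e₁ e₂
  exact ⟨e₁, by linarith⟩

theorem eqOn_scaled_arch (hp : 1 < p) (ha : 0 < a) (hb : 0 < b) (hI : Convex ℝ I)
    (hv : IsFucikSolutionOn p a b I x x') {S S' : ℝ → ℝ}
    (hS : IsFucikSolutionOn p 1 1 univ S S') {c ω d : ℝ} (hc : 0 ≤ c) (hω : 0 ≤ ω)
    (hωa : ω ^ p = a) (hS0 : ∀ t ∈ I, 0 ≤ S (ω * t + d)) {t₀ : ℝ} (ht₀ : t₀ ∈ I)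
    (hx : x t₀ = c * S (ω * t₀ + d)) (hx' : x' t₀ = c * ω * S' (ω * t₀ + d)) :
    EqOn x (fun t => c * S (ω * t + d)) I ∧ EqOn x' (fun t => c * ω * S' (ω * t + d)) I := by
  have harch := hS.comp_affine (by linarith) hc ω d
  rw [abs_of_nonneg hω, mul_one, hωa] at harch
  exact hv.eqOn hp ha hb hI ((harch.mono (subset_univ I)).of_nonneg
    (fun t ht => mul_nonneg hc (hS0 t ht)) b) ht₀ hx hx'

end IsFucikSolutionOn

theorem exists_first_zero {f : ℝ → ℝ} (hf : Continuous f) (h0 : 0 < f 0) {t₁ : ℝ} (ht₁ : 0 ≤ t₁)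
    (hz : f t₁ = 0) : ∃ T, 0 < T ∧ f T = 0 ∧ ∀ t ∈ Ico 0 T, 0 < f t := by
  set Z := Icc 0 t₁ ∩ f ⁻¹' {0}
  have hZ : IsCompact Z := isCompact_Icc.inter_right (isClosed_singleton.preimage hf)
  have hT : sInf Z ∈ Z := hZ.sInf_mem ⟨t₁, ⟨ht₁, le_rfl⟩, hz⟩
  have hTpos : 0 < sInf Z := by
    refine hT.1.1.lt_of_ne fun h => ?_
    have := hT.2
    rw [← h, mem_preimage, mem_singleton_iff] at this
    linarith
  refine ⟨sInf Z, hTpos, hT.2, fun t ht => ?_⟩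
  by_contra hle
  obtain ⟨c, hc, hfc⟩ := intermediate_value_Icc' ht.1 hf.continuousOn ⟨not_lt.1 hle, h0.le⟩
  have : sInf Z ≤ c := csInf_le hZ.bddBelow ⟨⟨hc.1, hc.2.trans (ht.2.le.trans hT.1.2)⟩, hfc⟩
  linarith [hc.2, ht.2]

theorem pip_pos {p : ℝ} (hp : 1 < p) : 0 < pip p := by
  have hsin : 0 < sin (π / p) := sin_pos_of_pos_of_lt_pi (by positivity) (div_lt_self pi_pos hp)
  have hM : 0 < (p - 1) ^ (1 / p) := rpow_pos_of_pos (by linarith) _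
  unfold pip
  positivity

theorem pip_lt {p : ℝ} (hp : 2 ≤ p) : pip p < 4 * (p - 1) ^ (1 / p) := by
  have hM : 0 < (p - 1) ^ (1 / p) := rpow_pos_of_pos (by linarith) _
  -- Jordan's inequality `sin x ≥ 2 x / π` on `[0, π / 2]`
  have hjordan : 2 ≤ p * sin (π / p) := by
    have := mul_le_sin (by positivity : 0 ≤ π / p) (div_le_div_of_nonneg_left pi_pos.le two_pos hp)
    rw [show 2 / π * (π / p) = 2 / p by field_simp, div_le_iff₀ (by linarith)] at this
    linarith
  calc pip p ≤ π * (p - 1) ^ (1 / p) := by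
        unfold pip
        rw [div_le_iff₀ (by linarith)]
        nlinarith [mul_le_mul_of_nonneg_left hjordan (mul_pos pi_pos hM).le]
    _ < 4 * (p - 1) ^ (1 / p) := by gcongr; exact pi_lt_four

/-- For `a = b = 1` the equation is `(φ_p(S'))' + φ_p(S) = 0`, so this says `S = sin_p`. -/
structure IsSinP (p : ℝ) (S S' : ℝ → ℝ) : Prop where
  isFucikSolutionOn : IsFucikSolutionOn p 1 1 univ S S'
  apply_zero : S 0 = 0
  deriv_zero : S' 0 = 1

namespace IsSinP

variable {p : ℝ} {S S' : ℝ → ℝ}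

theorem hasDerivAt (hS : IsSinP p S S') (t : ℝ) : HasDerivAt S (S' t) t :=
  (hS.isFucikSolutionOn t (mem_univ t)).1

theorem energy (hp : 1 < p) (hS : IsSinP p S S') (t : ℝ) :
    |S t| ^ p + (p - 1) * |S' t| ^ p = p - 1 := by
  have := hS.isFucikSolutionOn.energy_eq hp convex_univ (mem_univ t) (mem_univ 0)
  simpa [fucikEnergy, fucikPotential_one_one (by linarith : (0 : ℝ) < p), hS.apply_zero,
    hS.deriv_zero, zero_rpow (by linarith : p ≠ 0)] using this

theorem abs_deriv_le_one (hp : 1 < p) (hS : IsSinP p S S') (t : ℝ) : |S' t| ≤ 1 := by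
  by_contra h
  have h1 := one_lt_rpow (not_le.1 h) (by linarith : 0 < p)
  have h2 : 0 ≤ |S t| ^ p := rpow_nonneg (abs_nonneg _) _
  nlinarith [hS.energy hp t]

theorem apply_eq_of_deriv_eq_zero (hp : 1 < p) (hS : IsSinP p S S') {t : ℝ} (hS't : S' t = 0)
    (hSt : 0 < S t) : S t = (p - 1) ^ (1 / p) := by
  have h := hS.energy hp t
  rw [hS't, abs_zero, zero_rpow (by linarith), mul_zero, add_zero, abs_of_pos hSt] at h
  rw [← h, one_div, rpow_rpow_inv hSt.le (by linarith)]

theorem exists_quarter_period (hp : 1 < p) (hS : IsSinP p S S') {P : ℝ} (hP : 0 < P)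
    (hSP : S P = 0) : ∃ T, (p - 1) ^ (1 / p) ≤ T ∧ S T = (p - 1) ^ (1 / p) ∧ S' T = 0 ∧
      ∀ t ∈ Ioo 0 (2 * T), 0 < S t := by
  have hcont : Continuous S := continuous_iff_continuousAt.2 fun t => (hS.hasDerivAt t).continuousAt
  obtain ⟨t₁, ht₁, hS't₁⟩ := exists_hasDerivAt_eq_zero hP hcont.continuousOn
    (hS.apply_zero.trans hSP.symm) fun t _ => hS.hasDerivAt t
  obtain ⟨T, hT, hS'T, hS'pos⟩ := exists_first_zero
    (continuous_iff_continuousAt.2 fun t => hS.isFucikSolutionOn.continuousAt_deriv hp (mem_univ t))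
    (by rw [hS.deriv_zero]; exact one_pos) ht₁.1.le hS't₁
  have hmono : StrictMonoOn S (Icc 0 T) := strictMonoOn_of_deriv_pos (convex_Icc 0 T)
    hcont.continuousOn fun t ht => by
      rw [interior_Icc] at ht
      rw [(hS.hasDerivAt t).deriv]
      exact hS'pos t ⟨ht.1.le, ht.2⟩
  have hSpos : ∀ t ∈ Ioc 0 T, 0 < S t := fun t ht =>
    hS.apply_zero ▸ hmono ⟨le_rfl, hT.le⟩ ⟨ht.1.le, ht.2⟩ ht.1
  have hST := hS.apply_eq_of_deriv_eq_zero hp hS'T (hSpos T ⟨hT, le_rfl⟩)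
  refine ⟨T, ?_, hST, hS'T, fun t ht => ?_⟩
  · have := monotone_of_hasDerivAt_nonneg (fun t => (hasDerivAt_id t).sub (hS.hasDerivAt t))
      (fun t => sub_nonneg.2 ((le_abs_self _).trans (hS.abs_deriv_le_one hp t))) hT.le
    simp only [Pi.sub_apply, id, hS.apply_zero, sub_zero] at this
    linarith
  · rcases le_total t T with h | h
    · exact hSpos t ⟨ht.1, h⟩
    · rw [← (hS.isFucikSolutionOn.apply_two_mul_sub hp one_pos one_pos hS'T t).1]
      exact hSpos _ ⟨by linarith [ht.2], by linarith⟩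

theorem pip_facts (hp : 2 ≤ p) (hS : IsSinP p S S') (hper : Function.Periodic S (2 * pip p))
    (hodd : ∀ t, S (-t) = -S t) :
    (∀ s ∈ Icc 0 (pip p), 0 ≤ S s) ∧ S (pip p / 2) = (p - 1) ^ (1 / p) ∧ S' (pip p / 2) = 0 ∧
      S (pip p) = 0 ∧ S' (pip p) = -1 := by
  have hp1 : 1 < p := by linarith
  have hπ := pip_pos hp1
  have hSπ : S (pip p) = 0 := by
    have := hper (-pip p)
    rw [show -pip p + 2 * pip p = pip p by ring, hodd] at this
    linarith
  obtain ⟨T, hMT, hST, hS'T, hpos⟩ := hS.exists_quarter_period hp1 hπ hSπ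
  have hrefl := hS.isFucikSolutionOn.apply_two_mul_sub hp1 one_pos one_pos hS'T
  -- `2 T` is the first positive zero of `S`, the next one is `4 T`, and `π_p < 4 T`
  have hT : 2 * T = pip p := by
    rcases lt_trichotomy (pip p) (2 * T) with h | h | h
    · exact absurd hSπ (hpos _ ⟨hπ, h⟩).ne'
    · exact h.symm
    · have h4 : pip p < 4 * T := (pip_lt hp).trans_le (by linarith)
      have hneg := hpos (pip p - 2 * T) ⟨by linarith, by linarith⟩
      have e := (hrefl (2 * T - pip p)).1
      rw [sub_sub_cancel, ← neg_sub, hodd] at e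
      linarith
  rw [← hT, mul_div_cancel_left₀ _ two_ne_zero]
  have h0 := hrefl 0
  rw [sub_zero, hS.apply_zero, hS.deriv_zero] at h0
  refine ⟨fun s hs => ?_, hST, hS'T, h0.1, h0.2⟩
  rcases hs.1.eq_or_lt with rfl | h1
  · rw [hS.apply_zero]
  rcases hs.2.eq_or_lt with rfl | h2
  · rw [h0.1]
  exact (hpos s ⟨h1, h2⟩).le

end IsSinP

theorem half_arches_add {p a b : ℝ} (ha : 0 < a) (hb : 0 < b)
    (hab : a ^ (-(1 : ℝ) / p) + b ^ (-(1 : ℝ) / p) = 2) (P : ℝ) :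
    P / (2 * a ^ (1 / p)) + P / (2 * b ^ (1 / p)) = P := by
  rw [neg_div, rpow_neg ha.le, rpow_neg hb.le] at hab
  have hα := rpow_pos_of_pos ha (1 / p)
  have hβ := rpow_pos_of_pos hb (1 / p)
  field_simp at hab ⊢
  linear_combination P * hab

theorem IsFucikSolutionOn.eqOn_two_arches {p α β P : ℝ} {S S' v v' : ℝ → ℝ} (hp : 1 < p)
    (hα : 0 < α) (hβ : 0 < β) (hP₀ : 0 ≤ P) (hP : P / (2 * α) + P / (2 * β) = P)
    (hS : IsSinP p S S') (hS_nonneg : ∀ s ∈ Icc 0 P, 0 ≤ S s) (hS'_half : S' (P / 2) = 0)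
    (hS_P : S P = 0) (hS'_P : S' P = -1) (hv : IsFucikSolutionOn p (α ^ p) (β ^ p) univ v v')
    (hv0 : v 0 = S (P / 2)) (hv'0 : v' 0 = 0) :
    EqOn v (fun t => S (α * t + P / 2)) (Icc 0 (P / (2 * α))) ∧
      EqOn v (fun t => -(α / β) * S (β * (t - P / (2 * α)))) (Icc (P / (2 * α)) P) ∧
      v' P = 0 := by
  have ha : 0 < α ^ p := rpow_pos_of_pos hα p
  have hb : 0 < β ^ p := rpow_pos_of_pos hβ p
  have hαT₁ : α * (P / (2 * α)) = P / 2 := by field_simp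
  have hβT₁ : β * (P - P / (2 * α)) = P / 2 := by rw [← eq_sub_of_add_eq' hP]; field_simp
  set T₁ := P / (2 * α)
  have hT₁ : 0 ≤ T₁ := by positivity
  have hT₁P : T₁ ≤ P := by nlinarith
  obtain ⟨h₁, h₁'⟩ := (hv.mono (subset_univ _)).eqOn_scaled_arch hp ha hb (convex_Icc 0 T₁)
    hS.isFucikSolutionOn zero_le_one hα.le rfl (d := P / 2)
    (fun t ht => hS_nonneg _ ⟨by nlinarith [ht.1], by nlinarith [ht.2]⟩) (t₀ := 0)
    ⟨le_rfl, hT₁⟩ (by rw [hv0, mul_zero, zero_add, one_mul])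
    (by rw [hv'0, mul_zero, zero_add, hS'_half, mul_zero])
  have hvT₁ := h₁ ⟨hT₁, le_rfl⟩
  have hv'T₁ := h₁' ⟨hT₁, le_rfl⟩
  simp only [hαT₁, add_halves, hS_P, hS'_P] at hvT₁ hv'T₁
  obtain ⟨h₂, h₂'⟩ := (hv.neg.mono (subset_univ _)).eqOn_scaled_arch hp hb ha
    (convex_Icc T₁ P) hS.isFucikSolutionOn (c := α / β) (by positivity) hβ.le rfl
    (d := -(β * T₁)) (fun t ht => hS_nonneg _ ⟨by nlinarith [ht.1], by nlinarith [ht.2]⟩)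
    (t₀ := T₁) ⟨le_rfl, hT₁P⟩ (by rw [Pi.neg_apply, hvT₁, add_neg_cancel, hS.apply_zero]; ring)
    (by rw [Pi.neg_apply, hv'T₁, add_neg_cancel, hS.deriv_zero, div_mul_cancel₀ _ hβ.ne']; ring)
  refine ⟨fun t ht => (h₁ ht).trans (one_mul _), fun t ht => ?_, ?_⟩
  · have := h₂ ht
    simp only [Pi.neg_apply] at this
    rw [show β * t + -(β * T₁) = β * (t - T₁) by ring] at this
    linarith
  · have := h₂' ⟨hT₁P, le_rfl⟩
    simp only [Pi.neg_apply] at this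
    rw [show β * P + -(β * T₁) = P / 2 by linarith, hS'_half] at this
    linarith

theorem explicit_formula_for_v_general
    (p a₁ b₁ : ℝ) (S S' v v' : ℝ → ℝ)
    (hp : 2 ≤ p)
    (ha₁ : 0 < a₁) (hb₁ : 0 < b₁)
    (hab : a₁ ^ (-(1 : ℝ) / p) + b₁ ^ (-(1 : ℝ) / p) = 2)
    -- `S = sin_p`
    (hS : ∀ t, HasDerivAt S (S' t) t)
    (hSode : ∀ t, HasDerivAt (fun s => phi p (S' s)) (-phi p (S t)) t)
    (hS0 : S 0 = 0) (hS'0 : S' 0 = 1)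
    (hSper : Function.Periodic S (2 * pip p)) (hSodd : ∀ t, S (-t) = -S t)
    -- `v`
    (hv : ∀ t, HasDerivAt v (v' t) t)
    (hode : ∀ t, HasDerivAt (fun s => phi p (v' s))
      (-a₁ * phi p (max (v t) 0) + b₁ * phi p (max (-v t) 0)) t)
    (hv0 : v 0 = (p - 1) ^ (1 / p)) (hv'0 : v' 0 = 0) :
    (∀ t : ℝ, 0 ≤ t → t ≤ pip p / (2 * a₁ ^ (1 / p)) →
        v t = S (a₁ ^ (1 / p) * t + pip p / 2)) ∧
    (∀ t : ℝ, pip p / (2 * a₁ ^ (1 / p)) < t → t ≤ pip p →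
        v t = -(a₁ / b₁) ^ (1 / p) * S (b₁ ^ (1 / p) * (t - pip p / (2 * a₁ ^ (1 / p))))) ∧
    (∀ t : ℝ, t ∈ Set.Icc (pip p) (2 * pip p) → v (2 * pip p - t) = v t) := by
  have hp1 : 1 < p := by linarith
  have hsin : IsSinP p S S' :=
    ⟨fun t _ => ⟨hS t, (hSode t).congr_deriv (by rw [← phi_max_sub_phi_max]; ring)⟩, hS0, hS'0⟩
  obtain ⟨hS_nonneg, hS_half, hS'_half, hS_pi, hS'_pi⟩ := hsin.pip_facts hp hSper hSodd
  have hsol : IsFucikSolutionOn p a₁ b₁ univ v v' := fun t _ => ⟨hv t, hode t⟩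
  have hpow : ∀ {c : ℝ}, 0 < c → (c ^ (1 / p)) ^ p = c := fun hc => by
    rw [one_div, rpow_inv_rpow hc.le (by linarith)]
  obtain ⟨h₁, h₂, hv'π⟩ := IsFucikSolutionOn.eqOn_two_arches hp1 (rpow_pos_of_pos ha₁ _)
    (rpow_pos_of_pos hb₁ _) (pip_pos hp1).le (half_arches_add ha₁ hb₁ hab _) hsin hS_nonneg
    hS'_half hS_pi hS'_pi (by rwa [hpow ha₁, hpow hb₁]) (hv0.trans hS_half.symm) hv'0
  refine ⟨fun t ht₀ ht₁ => h₁ ⟨ht₀, ht₁⟩, fun t ht₀ ht₁ => ?_,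
    fun t _ => (hsol.apply_two_mul_sub hp1 ha₁ hb₁ hv'π t).1⟩
  rw [h₂ ⟨ht₀.le, ht₁⟩, div_rpow ha₁.le hb₁.le]

/-- The solution `v` of `(φ_p(v'))' + a₁ φ_p(v⁺) − b₁ φ_p(v⁻) = 0`,
`v(0) = (p−1)^{1/p}`, `v'(0) = 0`, is given explicitly in terms of `sin_p`
(the solution `S` of `(φ_p(S'))' + φ_p(S) = 0`, `S(0)=0`, `S'(0)=1`) by:
`v(t) = sin_p(a₁^{1/p} t + π_p/2)` on `[0, π_p/(2a₁^{1/p})]`,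
`v(t) = −(a₁/b₁)^{1/p} sin_p(b₁^{1/p}(t − π_p/(2a₁^{1/p})))` on `(π_p/(2a₁^{1/p}), π_p]`,
and `v(2π_p − t) = v(t)` on `[π_p, 2π_p]`. -/
theorem explicit_formula_for_v
    (p q a₁ b₁ : ℝ) (S S' v v' : ℝ → ℝ)
    (hp : 2 ≤ p) (hq : q = p / (p - 1))
    (ha₁ : 0 < a₁) (hb₁ : 0 < b₁)
    (hab : a₁ ^ (-(1 : ℝ) / p) + b₁ ^ (-(1 : ℝ) / p) = 2)
    -- `S = sin_p`
    (hS : ∀ t, HasDerivAt S (S' t) t)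
    (hSode : ∀ t, HasDerivAt (fun s => phi p (S' s)) (-phi p (S t)) t)
    (hS0 : S 0 = 0) (hS'0 : S' 0 = 1)
    (hSper : Function.Periodic S (2 * pip p)) (hSodd : ∀ t, S (-t) = -S t)
    -- `v`
    (hv : ∀ t, HasDerivAt v (v' t) t)
    (hode : ∀ t, HasDerivAt (fun s => phi p (v' s))
      (-a₁ * phi p (max (v t) 0) + b₁ * phi p (max (-v t) 0)) t)
    (hv0 : v 0 = (p - 1) ^ (1 / p)) (hv'0 : v' 0 = 0) :
    (∀ t : ℝ, 0 ≤ t → t ≤ pip p / (2 * a₁ ^ (1 / p)) →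
        v t = S (a₁ ^ (1 / p) * t + pip p / 2)) ∧
    (∀ t : ℝ, pip p / (2 * a₁ ^ (1 / p)) < t → t ≤ pip p →
        v t = -(a₁ / b₁) ^ (1 / p) * S (b₁ ^ (1 / p) * (t - pip p / (2 * a₁ ^ (1 / p))))) ∧
    (∀ t : ℝ, t ∈ Set.Icc (pip p) (2 * pip p) → v (2 * pip p - t) = v t) :=
  explicit_formula_for_v_general p a₁ b₁ S S' v v' hp ha₁ hb₁ hab hS hSode hS0 hS'0 hSper hSodd hv
    hode hv0 hv'0
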